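/- arXiv:0801.2844 — 2 statements merged into one kernel-verified Lean document; each statement's English description precedes it below -/
import Mathlib

section
/- For every irrational real number x such that the Brjuno series B(x) = Σ_{k=0}^∞ (log a_{k+1})/q_k converges, the classical Brjuno series B_cl(x) = Σ_{k=0}^∞ (log q_{k+1})/q_k also converges, and 0 ≤ B_cl(x) − B(x) ≤ Σ_{k=0}^∞ log(2F_k)/F_k < +∞. -/
open scoped ENNReal Topology

noncomputable def gaussIter (x : ℝ) : ℕ → ℝ
  | 0 => Int.fract x
  | n + 1 => Int.fract (gaussIter x n)⁻¹

noncomputable def pquot (x : ℝ) : ℕ → ℤ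
  | 0 => ⌊x⌋
  | n + 1 => ⌊(gaussIter x n)⁻¹⌋

noncomputable def qden (x : ℝ) : ℕ → ℤ
  | 0 => 1
  | 1 => pquot x 1
  | n + 2 => pquot x (n + 2) * qden x (n + 1) + qden x n

noncomputable def pnum (x : ℝ) : ℕ → ℤ
  | 0 => pquot x 0
  | 1 => pquot x 1 * pquot x 0 + 1
  | n + 2 => pquot x (n + 2) * pnum x (n + 1) + pnum x n

noncomputable def brjunoTerm (x : ℝ) (k : ℕ) : ℝ :=
  Real.log (pquot x (k + 1)) / (qden x k : ℝ)

open Classical in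
noncomputable def brjuno (x : ℝ) : ℝ≥0∞ :=
  if Irrational x then ∑' k, ENNReal.ofReal (brjunoTerm x k) else ⊤

noncomputable def brjunoTailE (x : ℝ) (n : ℕ) : ℝ≥0∞ :=
  ∑' k, ENNReal.ofReal (brjunoTerm x (n + k))

noncomputable def cfLen (x : ℝ) : ℕ := sInf {n | gaussIter x n = 0}

noncomputable def brjunoFinite (x : ℝ) : ℝ :=
  ∑ k ∈ Finset.range (cfLen x), Real.log (pquot x (k + 1)) / (qden x k : ℝ)

def brjunoSuper (t : ℝ) : Set ℝ := {x | ENNReal.ofReal t < brjuno x}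

def IsCompOf (A : Set ℝ) (a b : ℝ) : Prop := ∃ x ∈ A, connectedComponentIn A x = Set.Ioo a b

def diamond (κ a b : ℝ) : Set ℂ :=
  {z : ℂ | a < z.re ∧ z.re < b ∧ |z.im| ≤ κ * min (z.re - a) (b - z.re)}

noncomputable def CMset (κ M : ℝ) : Set ℂ :=
  (fun ξ : ℂ => Complex.exp (2 * Real.pi * Complex.I * ξ)) ''
    (⋃ (a : ℝ) (b : ℝ) (_ : IsCompOf (brjunoSuper M) a b), diamond κ a b)ᶜ ∪ {0}

/-! Since `q (k + 1) = a (k + 1) * q k + q (k - 1)` with `0 ≤ q (k - 1) ≤ q k`, one has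
`a (k + 1) * q k ≤ q (k + 1) ≤ 2 * a (k + 1) * q k`, so the `k`-th terms of the classical and
the usual Brjuno series differ by `log (q (k + 1) / a (k + 1)) / q k ∈ [0, log (2 q k) / q k]`.
As `y ↦ log (2y) / y` is antitone on the positive integers and `q k ≥ F k = Nat.fib (k + 1)`,
the gap is at most `log (2 F k) / F k`, which is summable because `φ ^ (k - 1) ≤ F k ≤ φ ^ k`. -/

open Real
open scoped goldenRatio

theorem Irrational.fract {y : ℝ} (hy : Irrational y) : Irrational (Int.fract y) := by
  rw [← Int.self_sub_floor]
  exact hy.sub_intCast _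

theorem log_two_mul_div_antitoneOn :
    AntitoneOn (fun y : ℝ => log (2 * y) / y) (Set.Ici (exp 1 / 2)) := by
  intro m hm n hn hmn
  have hm0 : 0 < m := lt_of_lt_of_le (by positivity) (Set.mem_Ici.mp hm)
  have hdouble := log_div_self_antitoneOn (a := 2 * m) (b := 2 * n)
    (by simp only [Set.mem_Ici] at hm ⊢; linarith) (by simp only [Set.mem_Ici] at hn ⊢; linarith)
    (by linarith)
  have hrescale : ∀ y : ℝ, 0 < y → log (2 * y) / y = 2 * (log (2 * y) / (2 * y)) :=
    fun y hy => by field_simp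
  simp only
  rw [hrescale m hm0, hrescale n (by linarith)]
  linarith

theorem log_two_mul_div_le_of_le {m n : ℤ} (hm : 1 ≤ m) (hmn : m ≤ n) :
    log (2 * n) / n ≤ log (2 * m) / m := by
  have exp_one_div_two_le : exp 1 / 2 ≤ 2 := by linarith [exp_one_lt_d9]
  rcases hm.eq_or_lt with rfl | hm2
  · rcases hmn.eq_or_lt with rfl | hn2
    · rfl
    -- `y ↦ log (2y)/y` takes the value `log 2` at both `1` and `2`, and increases in between.
    calc log (2 * n) / n ≤ log (2 * 2) / 2 :=
          log_two_mul_div_antitoneOn (by simpa using exp_one_div_two_le)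
            (by simp only [Set.mem_Ici]; linarith [(show (2 : ℝ) ≤ n by exact_mod_cast hn2)])
            (by exact_mod_cast hn2)
      _ = log 2 := by rw [← sq, log_pow]; ring
      _ = log (2 * ((1 : ℤ) : ℝ)) / ((1 : ℤ) : ℝ) := by simp
  · have hm2' : (2 : ℝ) ≤ m := by exact_mod_cast hm2
    exact log_two_mul_div_antitoneOn (by simp only [Set.mem_Ici]; linarith)
      (by simp only [Set.mem_Ici]; linarith [(show (m : ℝ) ≤ n by exact_mod_cast hmn)])
      (by exact_mod_cast hmn)

theorem goldenRatio_pow_le_mul_fib_succ (n : ℕ) : φ ^ n ≤ φ * Nat.fib (n + 1) := by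
  have h := fib_succ_sub_goldenConj_mul_fib n
  have hfib : (Nat.fib n : ℝ) ≤ Nat.fib (n + 1) := by exact_mod_cast Nat.fib_le_fib_succ
  rw [← one_sub_goldenConj] at h
  nlinarith [one_lt_goldenRatio]

theorem fib_succ_le_goldenRatio_pow (n : ℕ) : (Nat.fib (n + 1) : ℝ) ≤ φ ^ n := by
  have h := fib_succ_sub_goldenConj_mul_fib n
  nlinarith [goldenConj_neg, (Nat.cast_nonneg (Nat.fib n) : (0 : ℝ) ≤ _)]

theorem summable_log_two_mul_fib_div_fib :
    Summable (fun k => log (2 * (Nat.fib (k + 1) : ℝ)) / (Nat.fib (k + 1) : ℝ)) := by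
  have hr : ‖φ⁻¹‖ < 1 := by
    rw [norm_inv, Real.norm_of_nonneg goldenRatio_pos.le]
    exact inv_lt_one_of_one_lt₀ one_lt_goldenRatio
  have hM : Summable (fun k : ℕ => φ * log 2 * φ⁻¹ ^ k + φ * log φ * ((k : ℝ) ^ 1 * φ⁻¹ ^ k)) :=
    ((summable_geometric_of_norm_lt_one hr).mul_left _).add
      ((summable_pow_mul_geometric_of_norm_lt_one 1 hr).mul_left _)
  have hF1 (k : ℕ) : (1 : ℝ) ≤ Nat.fib (k + 1) := by exact_mod_cast Nat.fib_pos.mpr k.succ_pos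
  refine hM.of_nonneg_of_le (fun k => ?_) (fun k => ?_)
  · exact div_nonneg (log_nonneg (by linarith [hF1 k])) (by linarith [hF1 k])
  · have hF : (0 : ℝ) < Nat.fib (k + 1) := by linarith [hF1 k]
    have hnum : log (2 * (Nat.fib (k + 1) : ℝ)) ≤ log 2 + k * log φ := by
      rw [← log_pow, ← log_mul two_ne_zero (pow_pos goldenRatio_pos k).ne']
      exact log_le_log (by positivity) (by linarith [fib_succ_le_goldenRatio_pow k])
    have hden : (Nat.fib (k + 1) : ℝ)⁻¹ ≤ φ * φ⁻¹ ^ k := by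
      rw [inv_pow, ← div_eq_mul_inv, inv_le_comm₀ hF (by positivity), inv_div,
        div_le_iff₀ goldenRatio_pos, mul_comm]
      exact goldenRatio_pow_le_mul_fib_succ k
    have hlog : 0 ≤ log 2 + k * log φ := by
      have := log_nonneg one_lt_goldenRatio.le
      have := log_nonneg one_le_two
      positivity
    calc log (2 * (Nat.fib (k + 1) : ℝ)) / Nat.fib (k + 1)
        = log (2 * (Nat.fib (k + 1) : ℝ)) * (Nat.fib (k + 1) : ℝ)⁻¹ := div_eq_mul_inv _ _
      _ ≤ (log 2 + k * log φ) * (φ * φ⁻¹ ^ k) :=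
          mul_le_mul hnum hden (inv_nonneg.mpr hF.le) hlog
      _ = _ := by ring

theorem log_div_sub_log_div_mem_Icc {a q q' : ℝ} (ha : 1 ≤ a) (hq : 1 ≤ q)
    (hlow : a * q ≤ q') (hup : q' ≤ 2 * a * q) :
    log q' / q - log a / q ∈ Set.Icc 0 (log (2 * q) / q) := by
  have ha0 : 0 < a := by linarith
  have hq0 : 0 < q := by linarith
  have hlog_low : log a ≤ log q' := log_le_log ha0 (by nlinarith)
  have hlog_up : log q' ≤ log a + log (2 * q) := by
    rw [← log_mul ha0.ne' (by positivity)]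
    exact log_le_log (by nlinarith) (by linarith)
  rw [← sub_div]
  exact ⟨div_nonneg (by linarith) hq0.le, div_le_div_of_nonneg_right (by linarith) hq0.le⟩

theorem summable_and_tsum_sub_tsum_mem_Icc {ι : Type*} {b c d : ι → ℝ} (hb : Summable b)
    (hd : Summable d) (h : ∀ i, c i - b i ∈ Set.Icc 0 (d i)) :
    Summable c ∧ ∑' i, c i - ∑' i, b i ∈ Set.Icc 0 (∑' i, d i) := by
  have hcb : Summable (fun i => c i - b i) :=
    hd.of_nonneg_of_le (fun i => (h i).1) (fun i => (h i).2)
  have hc : Summable c := by simpa using hb.add hcb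
  rw [← hc.tsum_sub hb]
  exact ⟨hc, tsum_nonneg (fun i => (h i).1), hcb.tsum_le_tsum (fun i => (h i).2) hd⟩

namespace Brjuno

variable {x : ℝ}

theorem irrational_gaussIter (hx : Irrational x) : ∀ n, Irrational (gaussIter x n)
  | 0 => hx.fract
  | n + 1 => (irrational_gaussIter hx n).inv.fract

theorem gaussIter_pos (hx : Irrational x) (n : ℕ) : 0 < gaussIter x n := by
  cases n with
  | zero => exact Int.fract_pos.mpr (hx.ne_int _)
  | succ n => exact Int.fract_pos.mpr ((irrational_gaussIter hx n).inv.ne_int _)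

theorem gaussIter_lt_one (n : ℕ) : gaussIter x n < 1 := by
  cases n <;> exact Int.fract_lt_one _

theorem one_le_pquot_succ (hx : Irrational x) (n : ℕ) : 1 ≤ pquot x (n + 1) :=
  Int.le_floor.mpr <| by
    exact_mod_cast ((one_lt_inv₀ (gaussIter_pos hx n)).mpr (gaussIter_lt_one n)).le

theorem one_le_qden (hx : Irrational x) : ∀ n, 1 ≤ qden x n
  | 0 => le_rfl
  | 1 => one_le_pquot_succ hx 0
  | n + 2 => by
    have := one_le_qden hx n
    have := one_le_qden hx (n + 1)
    have := one_le_pquot_succ hx (n + 1)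
    rw [qden]
    nlinarith

theorem pquot_mul_qden_le_qden_succ (hx : Irrational x) (n : ℕ) :
    pquot x (n + 1) * qden x n ≤ qden x (n + 1) := by
  cases n with
  | zero => simp [qden]
  | succ n =>
    rw [qden]
    linarith [one_le_qden hx n]

theorem qden_le_qden_succ (hx : Irrational x) (n : ℕ) : qden x n ≤ qden x (n + 1) := by
  have := one_le_qden hx n
  have := one_le_pquot_succ hx n
  nlinarith [pquot_mul_qden_le_qden_succ hx n]

theorem qden_succ_le_two_mul (hx : Irrational x) (n : ℕ) :
    qden x (n + 1) ≤ 2 * pquot x (n + 1) * qden x n := by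
  cases n with
  | zero =>
    change pquot x 1 ≤ 2 * pquot x 1 * 1
    linarith [one_le_pquot_succ hx 0]
  | succ n =>
    have := qden_le_qden_succ hx n
    have := one_le_pquot_succ hx (n + 1)
    have := one_le_qden hx (n + 1)
    change pquot x (n + 2) * qden x (n + 1) + qden x n ≤ 2 * pquot x (n + 2) * qden x (n + 1)
    nlinarith

theorem fib_succ_le_qden (hx : Irrational x) : ∀ n, (Nat.fib (n + 1) : ℤ) ≤ qden x n
  | 0 => by simp [qden]
  | 1 => by simpa [qden] using one_le_pquot_succ hx 0
  | n + 2 => by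
    have := fib_succ_le_qden hx n
    have := fib_succ_le_qden hx (n + 1)
    have := one_le_pquot_succ hx (n + 1)
    have := one_le_qden hx (n + 1)
    rw [qden, Nat.fib_add_two, Nat.cast_add]
    nlinarith

theorem log_qden_succ_div_sub_brjunoTerm_mem_Icc (hx : Irrational x) (k : ℕ) :
    log (qden x (k + 1)) / qden x k - brjunoTerm x k ∈
      Set.Icc 0 (log (2 * (Nat.fib (k + 1) : ℝ)) / Nat.fib (k + 1)) := by
  have hfib : (1 : ℤ) ≤ Nat.fib (k + 1) := by exact_mod_cast Nat.fib_pos.mpr k.succ_pos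
  obtain ⟨hgap_nonneg, hgap_le⟩ := log_div_sub_log_div_mem_Icc
    (a := pquot x (k + 1)) (q := qden x k) (q' := qden x (k + 1))
    (by exact_mod_cast one_le_pquot_succ hx k) (by exact_mod_cast one_le_qden hx k)
    (by exact_mod_cast pquot_mul_qden_le_qden_succ hx k)
    (by exact_mod_cast qden_succ_le_two_mul hx k)
  have hq := log_two_mul_div_le_of_le hfib (fib_succ_le_qden hx k)
  push_cast at hq
  exact ⟨hgap_nonneg, hgap_le.trans hq⟩

end Brjuno

/-- convergence of the classical Brjuno series and comparison with
the Brjuno series, with the Fibonacci bound. -/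
theorem statement0 (x : ℝ) (hx : Irrational x)
    (hB : Summable (fun k => Real.log (pquot x (k + 1) : ℝ) / (qden x k : ℝ))) :
    Summable (fun k => Real.log (qden x (k + 1) : ℝ) / (qden x k : ℝ)) ∧
    Summable (fun k => Real.log (2 * (Nat.fib (k + 1) : ℝ)) / (Nat.fib (k + 1) : ℝ)) ∧
    0 ≤ (∑' k, Real.log (qden x (k + 1) : ℝ) / (qden x k : ℝ)) -
        (∑' k, Real.log (pquot x (k + 1) : ℝ) / (qden x k : ℝ)) ∧
    (∑' k, Real.log (qden x (k + 1) : ℝ) / (qden x k : ℝ)) -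
        (∑' k, Real.log (pquot x (k + 1) : ℝ) / (qden x k : ℝ)) ≤
      ∑' k, Real.log (2 * (Nat.fib (k + 1) : ℝ)) / (Nat.fib (k + 1) : ℝ) := by
  obtain ⟨hclassical, hgap⟩ := summable_and_tsum_sub_tsum_mem_Icc hB
    summable_log_two_mul_fib_div_fib (Brjuno.log_qden_succ_div_sub_brjunoTerm_mem_Icc hx)
  exact ⟨hclassical, summable_log_two_mul_fib_div_fib, hgap⟩
end

section
/- Let x be an irrational real number with B(x) < +∞. Then for every ε > 0 there exist irrational numbers α⁻ and α⁺ such that: (i) α⁻ < x < α⁺ and α⁺ − α⁻ < ε; (ii) |B(α⁻) − B(x)| < ε and |B(α⁺) − B(x)| < ε. -/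
open scoped ENNReal Topology

/-!
Write `x = [a₀; a₁, a₂, …]` with convergents `pₙ / qₙ`. The number
`[a₀; a₁, …, aₙ, aₙ₊₁ + 1, 1, 1, …]` lies within `1 / qₙ` of `x`, to the left of `x` for even `n`
and to the right for odd `n`. Its Brjuno series agrees with that of `x` up to the index `n`, its
`n`-th term is `log (aₙ₊₁ + 1) / qₙ ≤ log 2 / qₙ + log aₙ₊₁ / qₙ`, and all later terms vanish
because `log 1 = 0`. Hence its Brjuno value differs from `B(x)` by at most `log 2 / qₙ` plus the
tail of the convergent series `B(x)` after the index `n`, and both tend to `0`.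
-/

open Filter
open scoped goldenRatio

lemma Irrational.int_fract {y : ℝ} (h : Irrational y) : Irrational (Int.fract y) :=
  h.sub_intCast ⌊y⌋

lemma Irrational.fract_pos {y : ℝ} (h : Irrational y) : 0 < Int.fract y :=
  (Int.fract_nonneg y).lt_of_ne' h.int_fract.ne_zero

section FloorRing

variable {R : Type*} [Ring R] [LinearOrder R] [FloorRing R] [IsOrderedRing R] {m : ℤ} {t : R}

lemma Int.floor_intCast_add_of_mem_Ico (ht : t ∈ Set.Ico 0 1) : ⌊(m : R) + t⌋ = m := by
  rw [Int.floor_intCast_add, Int.floor_eq_zero_iff.2 ht, add_zero]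

lemma Int.fract_intCast_add_of_mem_Ico (ht : t ∈ Set.Ico 0 1) : Int.fract ((m : R) + t) = t := by
  rw [Int.fract_intCast_add, Int.fract_eq_self.2 ht]

end FloorRing

section PartialQuotients

variable {x y t : ℝ}

lemma irrational_gaussIter (hx : Irrational x) : ∀ n, Irrational (gaussIter x n)
  | 0 => hx.int_fract
  | n + 1 => (irrational_gaussIter hx n).inv.int_fract

lemma gaussIter_pos (hx : Irrational x) : ∀ n, 0 < gaussIter x n
  | 0 => hx.fract_pos
  | n + 1 => (irrational_gaussIter hx n).inv.fract_pos

lemma gaussIter_lt_one (x : ℝ) : ∀ n, gaussIter x n < 1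
  | 0 => Int.fract_lt_one x
  | _ + 1 => Int.fract_lt_one _

lemma inv_gaussIter (x : ℝ) (n : ℕ) :
    (gaussIter x n)⁻¹ = pquot x (n + 1) + gaussIter x (n + 1) :=
  (Int.floor_add_fract _).symm

lemma pquot_succ_of_inv_gaussIter_eq {n : ℕ} {m : ℤ} (h : (gaussIter y n)⁻¹ = m + t)
    (ht : t ∈ Set.Ico 0 1) : pquot y (n + 1) = m := by
  show ⌊(gaussIter y n)⁻¹⌋ = m
  rw [h, Int.floor_intCast_add_of_mem_Ico ht]

lemma gaussIter_succ_of_inv_gaussIter_eq {n : ℕ} {m : ℤ} (h : (gaussIter y n)⁻¹ = m + t)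
    (ht : t ∈ Set.Ico 0 1) : gaussIter y (n + 1) = t := by
  show Int.fract (gaussIter y n)⁻¹ = t
  rw [h, Int.fract_intCast_add_of_mem_Ico ht]

lemma one_le_pquot_succ (hx : Irrational x) (n : ℕ) : 1 ≤ pquot x (n + 1) :=
  Int.le_floor.2 <| by
    exact_mod_cast ((one_lt_inv₀ (gaussIter_pos hx n)).2 (gaussIter_lt_one x n)).le

/-- `qPrev x n = qₙ₋₁` and `pPrev x n = pₙ₋₁`, with `q₋₁ = 0` and `p₋₁ = 1`. -/
noncomputable def qPrev (x : ℝ) : ℕ → ℤ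
  | 0 => 0
  | n + 1 => qden x n

noncomputable def pPrev (x : ℝ) : ℕ → ℤ
  | 0 => 1
  | n + 1 => pnum x n

lemma qPrev_succ (x : ℝ) (n : ℕ) : qPrev x (n + 1) = qden x n := rfl

lemma pPrev_succ (x : ℝ) (n : ℕ) : pPrev x (n + 1) = pnum x n := rfl

lemma qden_succ (x : ℝ) : ∀ n, qden x (n + 1) = pquot x (n + 1) * qden x n + qPrev x n
  | 0 => by simp [qden, qPrev]
  | _ + 1 => rfl

lemma pnum_succ (x : ℝ) : ∀ n, pnum x (n + 1) = pquot x (n + 1) * pnum x n + pPrev x n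
  | 0 => rfl
  | _ + 1 => rfl

lemma pPrev_mul_qden_sub_pnum_mul_qPrev (x : ℝ) :
    ∀ n, pPrev x n * qden x n - pnum x n * qPrev x n = (-1) ^ n
  | 0 => by simp [pPrev, qden, qPrev]
  | n + 1 => by
    rw [pPrev_succ, qPrev_succ, pnum_succ, qden_succ, pow_succ,
      ← pPrev_mul_qden_sub_pnum_mul_qPrev x n]
    ring

lemma one_le_qden (hx : Irrational x) : ∀ n, 1 ≤ qden x n
  | 0 => le_rfl
  | 1 => one_le_pquot_succ hx 0
  | n + 2 => by
    have ha : 1 ≤ pquot x (n + 2) := one_le_pquot_succ hx (n + 1)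
    rw [qden]
    nlinarith [one_le_qden hx n, one_le_qden hx (n + 1)]

lemma qPrev_nonneg (hx : Irrational x) : ∀ n, 0 ≤ qPrev x n
  | 0 => le_rfl
  | n + 1 => zero_le_one.trans (one_le_qden hx n)

lemma natCast_le_qden (hx : Irrational x) : ∀ n : ℕ, (n : ℤ) ≤ qden x n
  | 0 => zero_le_one
  | 1 => one_le_qden hx 1
  | n + 2 => by
    have ha : 1 ≤ pquot x (n + 2) := one_le_pquot_succ hx (n + 1)
    have hq : ((n + 1 : ℕ) : ℤ) ≤ qden x (n + 1) := natCast_le_qden hx (n + 1)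
    rw [qden]
    push_cast at hq ⊢
    nlinarith [one_le_qden hx n]

lemma tendsto_inv_qden (hx : Irrational x) :
    Tendsto (fun n => ((qden x n : ℝ))⁻¹) atTop (𝓝 0) :=
  tendsto_inv_atTop_zero.comp <| tendsto_atTop_mono
    (fun n => by exact_mod_cast natCast_le_qden hx n) tendsto_natCast_atTop_atTop

lemma qden_congr {n : ℕ} (h : ∀ k ≤ n, pquot y k = pquot x k) : ∀ k ≤ n, qden y k = qden x k
  | 0, _ => rfl
  | 1, hk => h 1 hk
  | k + 2, hk => by
    rw [qden, qden, h (k + 2) hk, qden_congr h (k + 1) (by omega), qden_congr h k (by omega)]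

end PartialQuotients

section TailReplacement

variable {x t : ℝ}

noncomputable def cfDen (x : ℝ) (n : ℕ) (t : ℝ) : ℝ := qden x n + qPrev x n * t

/-- `cfWithTail x n t = [a₀; a₁, …, aₙ, 1 / t]`, where `aₖ = pquot x k`. -/
noncomputable def cfWithTail (x : ℝ) (n : ℕ) (t : ℝ) : ℝ :=
  (pnum x n + pPrev x n * t) / cfDen x n t

lemma qden_le_cfDen (hx : Irrational x) (n : ℕ) (ht : 0 ≤ t) : (qden x n : ℝ) ≤ cfDen x n t :=
  le_add_of_nonneg_right (mul_nonneg (by exact_mod_cast qPrev_nonneg hx n) ht)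

lemma one_le_cfDen (hx : Irrational x) (n : ℕ) (ht : 0 ≤ t) : 1 ≤ cfDen x n t :=
  le_trans (by exact_mod_cast one_le_qden hx n) (qden_le_cfDen hx n ht)

lemma cfDen_pos (hx : Irrational x) (n : ℕ) (ht : 0 ≤ t) : 0 < cfDen x n t :=
  zero_lt_one.trans_le (one_le_cfDen hx n ht)

lemma cfWithTail_zero (x t : ℝ) : cfWithTail x 0 t = pquot x 0 + t := by
  simp [cfWithTail, cfDen, pnum, pPrev, qden, qPrev]

lemma cfWithTail_succ (x : ℝ) (n : ℕ) (h : (pquot x (n + 1) : ℝ) + t ≠ 0) :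
    cfWithTail x (n + 1) t = cfWithTail x n (pquot x (n + 1) + t)⁻¹ := by
  unfold cfWithTail cfDen
  conv_rhs => rw [← mul_div_mul_left _ _ h]
  rw [pnum_succ, qden_succ, pPrev_succ, qPrev_succ]
  push_cast
  congr 1 <;> field_simp <;> ring

lemma cfWithTail_gaussIter (hx : Irrational x) : ∀ n, cfWithTail x n (gaussIter x n) = x
  | 0 => by rw [cfWithTail_zero]; exact Int.floor_add_fract x
  | n + 1 => by
    have h := inv_gaussIter x n
    rw [cfWithTail_succ x n (h ▸ (inv_pos.2 (gaussIter_pos hx n)).ne'), ← h, inv_inv,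
      cfWithTail_gaussIter hx n]

lemma cfWithTail_sub_cfWithTail (hx : Irrational x) (n : ℕ) {s : ℝ} (hs : 0 ≤ s) (ht : 0 ≤ t) :
    cfWithTail x n t - cfWithTail x n s = (-1) ^ n * (t - s) / (cfDen x n t * cfDen x n s) := by
  have hdet : (pPrev x n * qden x n - pnum x n * qPrev x n : ℝ) = (-1) ^ n := by
    exact_mod_cast pPrev_mul_qden_sub_pnum_mul_qPrev x n
  unfold cfWithTail
  rw [div_sub_div _ _ (cfDen_pos hx n ht).ne' (cfDen_pos hx n hs).ne', ← hdet]
  unfold cfDen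
  ring

lemma irrational_cfWithTail (x : ℝ) : ∀ n {t : ℝ}, Irrational t → Irrational (cfWithTail x n t)
  | 0, t, ht => by rw [cfWithTail_zero]; exact ht.intCast_add _
  | n + 1, t, ht => by
    rw [cfWithTail_succ x n (ht.intCast_add _).ne_zero]
    exact irrational_cfWithTail x n (ht.intCast_add _).inv

lemma pquot_cfWithTail_and_gaussIter (hx : Irrational x) : ∀ n {t : ℝ}, t ∈ Set.Ioo 0 1 →
    (∀ k ≤ n, pquot (cfWithTail x n t) k = pquot x k) ∧ gaussIter (cfWithTail x n t) n = t
  | 0, t, ht => by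
    rw [cfWithTail_zero]
    refine ⟨fun k hk => ?_, Int.fract_intCast_add_of_mem_Ico (Set.Ioo_subset_Ico_self ht)⟩
    obtain rfl := Nat.le_zero.1 hk
    exact Int.floor_intCast_add_of_mem_Ico (Set.Ioo_subset_Ico_self ht)
  | n + 1, t, ht => by
    have ha : (1 : ℝ) ≤ pquot x (n + 1) := by exact_mod_cast one_le_pquot_succ hx n
    have hs : (pquot x (n + 1) + t)⁻¹ ∈ Set.Ioo 0 1 :=
      ⟨inv_pos.2 (by linarith [ht.1]), inv_lt_one_of_one_lt₀ (by linarith [ht.1])⟩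
    obtain ⟨hpquot, hgauss⟩ := pquot_cfWithTail_and_gaussIter hx n hs
    replace hgauss := inv_eq_iff_eq_inv.2 hgauss
    rw [cfWithTail_succ x n (by linarith [ht.1])]
    refine ⟨fun k hk => ?_,
      gaussIter_succ_of_inv_gaussIter_eq hgauss (Set.Ioo_subset_Ico_self ht)⟩
    rcases hk.lt_or_eq with hk | rfl
    · exact hpquot k (Nat.le_of_lt_succ hk)
    · exact pquot_succ_of_inv_gaussIter_eq hgauss (Set.Ioo_subset_Ico_self ht)

end TailReplacement

section GoldenApprox

variable {x : ℝ}

lemma goldenRatio_sub_one_mem_Ico : φ - 1 ∈ Set.Ico 0 1 :=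
  ⟨by linarith [Real.one_lt_goldenRatio], by linarith [Real.goldenRatio_lt_two]⟩

lemma inv_goldenRatio_sub_one : (φ - 1)⁻¹ = φ := by
  have h : φ - 1 = φ⁻¹ := by rw [Real.inv_goldenRatio, ← Real.one_sub_goldenConj]; ring
  rw [h, inv_inv]

/-- `goldenApprox x n = [a₀; a₁, …, aₙ, aₙ₊₁ + φ] = [a₀; a₁, …, aₙ, aₙ₊₁ + 1, 1, 1, …]`. -/
noncomputable def goldenApprox (x : ℝ) (n : ℕ) : ℝ :=
  cfWithTail x n (pquot x (n + 1) + φ)⁻¹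

lemma irrational_goldenApprox (x : ℝ) (n : ℕ) : Irrational (goldenApprox x n) :=
  irrational_cfWithTail x n (Real.goldenRatio_irrational.intCast_add _).inv

lemma inv_pquot_add_goldenRatio_pos (hx : Irrational x) (n : ℕ) :
    0 < (pquot x (n + 1) + φ)⁻¹ := by
  have ha : (1 : ℝ) ≤ pquot x (n + 1) := by exact_mod_cast one_le_pquot_succ hx n
  exact inv_pos.2 (by linarith [Real.goldenRatio_pos])

lemma pquot_goldenApprox_and_inv_gaussIter (hx : Irrational x) (n : ℕ) :
    (∀ k ≤ n, pquot (goldenApprox x n) k = pquot x k) ∧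
      (gaussIter (goldenApprox x n) n)⁻¹ = ((pquot x (n + 1) + 1 : ℤ) : ℝ) + (φ - 1) := by
  have ha : (1 : ℝ) ≤ pquot x (n + 1) := by exact_mod_cast one_le_pquot_succ hx n
  obtain ⟨hpquot, hgauss⟩ := pquot_cfWithTail_and_gaussIter hx n
    ⟨inv_pquot_add_goldenRatio_pos hx n,
      inv_lt_one_of_one_lt₀ (by linarith [Real.one_lt_goldenRatio])⟩
  refine ⟨hpquot, ?_⟩
  rw [goldenApprox, hgauss, inv_inv]
  push_cast
  ring

lemma pquot_goldenApprox_succ (hx : Irrational x) (n : ℕ) :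
    pquot (goldenApprox x n) (n + 1) = pquot x (n + 1) + 1 :=
  pquot_succ_of_inv_gaussIter_eq (pquot_goldenApprox_and_inv_gaussIter hx n).2
    goldenRatio_sub_one_mem_Ico

lemma gaussIter_goldenApprox (hx : Irrational x) (n : ℕ) :
    ∀ m, gaussIter (goldenApprox x n) (n + 1 + m) = φ - 1
  | 0 => gaussIter_succ_of_inv_gaussIter_eq (pquot_goldenApprox_and_inv_gaussIter hx n).2
    goldenRatio_sub_one_mem_Ico
  | m + 1 => by
    rw [← add_assoc]
    exact gaussIter_succ_of_inv_gaussIter_eq (m := 1)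
      (by rw [gaussIter_goldenApprox hx n m, inv_goldenRatio_sub_one]; push_cast; ring)
      goldenRatio_sub_one_mem_Ico

lemma pquot_goldenApprox_of_lt (hx : Irrational x) {n k : ℕ} (hk : n + 1 < k) :
    pquot (goldenApprox x n) k = 1 := by
  obtain ⟨m, rfl⟩ : ∃ m, k = n + 1 + m + 1 := ⟨k - (n + 2), by omega⟩
  exact pquot_succ_of_inv_gaussIter_eq (t := φ - 1)
    (by rw [gaussIter_goldenApprox hx n m, inv_goldenRatio_sub_one]; push_cast; ring)
    goldenRatio_sub_one_mem_Ico

end GoldenApprox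

section BrjunoSeries

variable {x y : ℝ}

lemma brjunoTerm_nonneg (hy : Irrational y) (k : ℕ) : 0 ≤ brjunoTerm y k :=
  div_nonneg (Real.log_nonneg (by exact_mod_cast one_le_pquot_succ hy k))
    (by exact_mod_cast zero_le_one.trans (one_le_qden hy k))

lemma brjuno_eq_ofReal (hy : Irrational y) {b : ℝ} (h : HasSum (brjunoTerm y) b) :
    brjuno y = ENNReal.ofReal b := by
  rw [brjuno, if_pos hy, ← ENNReal.ofReal_tsum_of_nonneg (brjunoTerm_nonneg hy) h.summable,
    h.tsum_eq]

lemma hasSum_brjunoTerm (hy : Irrational y) (hB : brjuno y ≠ ⊤) :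
    HasSum (brjunoTerm y) (brjuno y).toReal := by
  rw [brjuno, if_pos hy] at hB ⊢
  have h := ENNReal.hasSum_toReal hB
  simp only [ENNReal.toReal_ofReal (brjunoTerm_nonneg hy _)] at h
  rwa [ENNReal.tsum_toReal_eq fun _ => ENNReal.ofReal_ne_top,
    tsum_congr fun k => ENNReal.toReal_ofReal (brjunoTerm_nonneg hy k)]

lemma hasSum_brjunoTerm_goldenApprox (hx : Irrational x) (n : ℕ) :
    HasSum (brjunoTerm (goldenApprox x n))
      (∑ k ∈ Finset.range n, brjunoTerm x k + Real.log (pquot x (n + 1) + 1) / qden x n) := by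
  have hpquot := (pquot_goldenApprox_and_inv_gaussIter hx n).1
  have hqden := qden_congr hpquot
  have hzero : ∀ k ∉ Finset.range (n + 1), brjunoTerm (goldenApprox x n) k = 0 := by
    intro k hk
    rw [Finset.mem_range, not_lt] at hk
    simp [brjunoTerm, pquot_goldenApprox_of_lt hx (Nat.succ_lt_succ_iff.2 hk)]
  have hfinite : HasSum (brjunoTerm (goldenApprox x n)) _ := hasSum_sum_of_ne_finset_zero hzero
  convert hfinite using 1
  rw [Finset.sum_range_succ]
  congr 1
  · refine Finset.sum_congr rfl fun k hk => ?_
    have hk := Finset.mem_range.1 hk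
    rw [brjunoTerm, brjunoTerm, hpquot (k + 1) hk, hqden k hk.le]
  · rw [brjunoTerm, pquot_goldenApprox_succ hx, hqden n le_rfl]
    push_cast
    rfl

lemma brjuno_goldenApprox_ne_top (hx : Irrational x) (n : ℕ) : brjuno (goldenApprox x n) ≠ ⊤ := by
  rw [brjuno_eq_ofReal (irrational_goldenApprox x n) (hasSum_brjunoTerm_goldenApprox hx n)]
  exact ENNReal.ofReal_ne_top

lemma abs_brjuno_goldenApprox_sub_le (hx : Irrational x) (hB : brjuno x ≠ ⊤) (n : ℕ) :
    |(brjuno (goldenApprox x n)).toReal - (brjuno x).toReal|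
      ≤ ∑' k, brjunoTerm x (k + n) + Real.log 2 / qden x n := by
  have hsum := hasSum_brjunoTerm_goldenApprox hx n
  have hsummable := (hasSum_brjunoTerm hx hB).summable
  rw [brjuno_eq_ofReal (irrational_goldenApprox x n) hsum,
    ENNReal.toReal_ofReal (hsum.nonneg (brjunoTerm_nonneg (irrational_goldenApprox x n))),
    ← (hasSum_brjunoTerm hx hB).tsum_eq, ← hsummable.sum_add_tsum_nat_add n,
    add_sub_add_left_eq_sub]
  have ha : (1 : ℝ) ≤ pquot x (n + 1) := by exact_mod_cast one_le_pquot_succ hx n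
  have hq : (0 : ℝ) < qden x n := by exact_mod_cast zero_lt_one.trans_le (one_le_qden hx n)
  have hterm : brjunoTerm x n ≤ ∑' k, brjunoTerm x (k + n) := by
    simpa using ((summable_nat_add_iff n).2 hsummable).le_tsum 0
      fun k _ => brjunoTerm_nonneg hx (k + n)
  have hlog : Real.log (pquot x (n + 1) + 1) ≤ Real.log 2 + Real.log (pquot x (n + 1)) := by
    rw [← Real.log_mul two_ne_zero (by positivity)]
    exact Real.log_le_log (by positivity) (by linarith)
  have hlast :
      Real.log (pquot x (n + 1) + 1) / qden x n ≤ Real.log 2 / qden x n + brjunoTerm x n := by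
    rw [brjunoTerm, ← add_div]
    exact div_le_div_of_nonneg_right hlog hq.le
  have hlast_nonneg : 0 ≤ Real.log (pquot x (n + 1) + 1) / qden x n :=
    div_nonneg (Real.log_nonneg (by linarith)) hq.le
  have hlog2 : 0 ≤ Real.log 2 / qden x n := by positivity
  have htail_nonneg : 0 ≤ ∑' k, brjunoTerm x (k + n) :=
    tsum_nonneg fun k => brjunoTerm_nonneg hx (k + n)
  rw [abs_le]
  constructor <;> linarith

lemma tendsto_brjuno_goldenApprox (hx : Irrational x) (hB : brjuno x ≠ ⊤) :
    Tendsto (fun n => (brjuno (goldenApprox x n)).toReal) atTop (𝓝 (brjuno x).toReal) := by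
  have hbound : Tendsto (fun n => ∑' k, brjunoTerm x (k + n) + Real.log 2 * ((qden x n : ℝ))⁻¹)
      atTop (𝓝 0) := by
    simpa using (tendsto_sum_nat_add (brjunoTerm x)).add
      ((tendsto_inv_qden hx).const_mul (Real.log 2))
  refine tendsto_iff_dist_tendsto_zero.2 (squeeze_zero (fun _ => dist_nonneg) (fun n => ?_) hbound)
  rw [Real.dist_eq, ← div_eq_mul_inv]
  exact abs_brjuno_goldenApprox_sub_le hx hB n

end BrjunoSeries

section Distance

variable {x : ℝ}

lemma goldenApprox_sub_self (hx : Irrational x) (n : ℕ) :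
    goldenApprox x n - x = (-1) ^ n * ((pquot x (n + 1) + φ)⁻¹ - gaussIter x n)
      / (cfDen x n (pquot x (n + 1) + φ)⁻¹ * cfDen x n (gaussIter x n)) := by
  have h := cfWithTail_sub_cfWithTail hx n (gaussIter_pos hx n).le
    (inv_pquot_add_goldenRatio_pos hx n).le
  rwa [cfWithTail_gaussIter hx n] at h

lemma inv_pquot_add_goldenRatio_lt_gaussIter (hx : Irrational x) (n : ℕ) :
    (pquot x (n + 1) + φ)⁻¹ < gaussIter x n := by
  rw [inv_lt_comm₀ (inv_pos.1 (inv_pquot_add_goldenRatio_pos hx n)) (gaussIter_pos hx n),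
    inv_gaussIter]
  linarith [gaussIter_lt_one x (n + 1), Real.one_lt_goldenRatio]

lemma goldenApprox_lt_of_even (hx : Irrational x) {n : ℕ} (hn : Even n) : goldenApprox x n < x := by
  have h := goldenApprox_sub_self hx n
  rw [hn.neg_one_pow, one_mul] at h
  rw [← sub_neg, h]
  exact div_neg_of_neg_of_pos (sub_neg.2 (inv_pquot_add_goldenRatio_lt_gaussIter hx n))
    (mul_pos (cfDen_pos hx n (inv_pquot_add_goldenRatio_pos hx n).le)
      (cfDen_pos hx n (gaussIter_pos hx n).le))

lemma lt_goldenApprox_of_odd (hx : Irrational x) {n : ℕ} (hn : Odd n) : x < goldenApprox x n := by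
  have h := goldenApprox_sub_self hx n
  rw [hn.neg_one_pow, neg_one_mul, neg_sub] at h
  rw [← sub_pos, h]
  exact div_pos (sub_pos.2 (inv_pquot_add_goldenRatio_lt_gaussIter hx n))
    (mul_pos (cfDen_pos hx n (inv_pquot_add_goldenRatio_pos hx n).le)
      (cfDen_pos hx n (gaussIter_pos hx n).le))

lemma abs_goldenApprox_sub_le (hx : Irrational x) (n : ℕ) :
    |goldenApprox x n - x| ≤ ((qden x n : ℝ))⁻¹ := by
  have hs := inv_pquot_add_goldenRatio_pos hx n
  have hg := gaussIter_pos hx n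
  rw [goldenApprox_sub_self hx n, abs_div, abs_mul, abs_neg_one_pow, one_mul,
    abs_of_pos (mul_pos (cfDen_pos hx n hs.le) (cfDen_pos hx n hg.le))]
  refine (div_le_div₀ zero_le_one ?_ (by exact_mod_cast zero_lt_one.trans_le (one_le_qden hx n))
    ?_).trans_eq (one_div _)
  · rw [abs_sub_comm, abs_of_pos (sub_pos.2 (inv_pquot_add_goldenRatio_lt_gaussIter hx n))]
    linarith [gaussIter_lt_one x n]
  · simpa using mul_le_mul (qden_le_cfDen hx n hs.le) (one_le_cfDen hx n hg.le) zero_le_one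
      (cfDen_pos hx n hs.le).le

lemma tendsto_goldenApprox (hx : Irrational x) : Tendsto (goldenApprox x) atTop (𝓝 x) :=
  tendsto_iff_dist_tendsto_zero.2 <| squeeze_zero (fun _ => dist_nonneg)
    (fun n => (Real.dist_eq _ _).trans_le (abs_goldenApprox_sub_le hx n)) (tendsto_inv_qden hx)

end Distance

/-- approximation of a Brjuno number by Brjuno numbers from both sides,
with almost the same Brjuno value. -/
theorem statement1 (x : ℝ) (hx : Irrational x) (hB : brjuno x ≠ ⊤) :
    ∀ ε : ℝ, 0 < ε →
      ∃ αm αp : ℝ, Irrational αm ∧ Irrational αp ∧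
        αm < x ∧ x < αp ∧ αp - αm < ε ∧
        brjuno αm ≠ ⊤ ∧ brjuno αp ≠ ⊤ ∧
        |(brjuno αm).toReal - (brjuno x).toReal| < ε ∧
        |(brjuno αp).toReal - (brjuno x).toReal| < ε := by
  intro ε hε
  have hclose : ∀ᶠ n in atTop, goldenApprox x n ∈ Metric.ball x (ε / 2) ∧
      (brjuno (goldenApprox x n)).toReal ∈ Metric.ball (brjuno x).toReal ε :=
    ((tendsto_goldenApprox hx).eventually (Metric.ball_mem_nhds x (half_pos hε))).and
      ((tendsto_brjuno_goldenApprox hx hB).eventually (Metric.ball_mem_nhds _ hε))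
  obtain ⟨N, hN⟩ := eventually_atTop.1 hclose
  obtain ⟨hm, hBm⟩ := hN (2 * N) (by omega)
  obtain ⟨hp, hBp⟩ := hN (2 * N + 1) (by omega)
  simp only [Metric.mem_ball, Real.dist_eq] at hm hBm hp hBp
  refine ⟨goldenApprox x (2 * N), goldenApprox x (2 * N + 1), irrational_goldenApprox x _,
    irrational_goldenApprox x _, goldenApprox_lt_of_even hx (even_two_mul N),
    lt_goldenApprox_of_odd hx (odd_two_mul_add_one N), ?_, brjuno_goldenApprox_ne_top hx _,
    brjuno_goldenApprox_ne_top hx _, hBm, hBp⟩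
  linarith [(abs_lt.1 hm).1, (abs_lt.1 hp).2]
end
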